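/- Let α₁, α₂, β₁, β₂ > 0 with α₁α₂ < β₁β₂, and set h(t) = α₁ e^{−β₁ t} 1_{t≥0}, g(t) = α₂ e^{−β₂ t} 1_{t≥0}, so that ‖h‖_{L¹}‖g‖_{L¹} = α₁α₂/(β₁β₂) < 1. Define ρ₁ = ½(β₁+β₂+√((β₁−β₂)²+4α₁α₂)) and ρ₂ = ½(β₁+β₂−√((β₁−β₂)²+4α₁α₂)). Then 0 < ρ₂ < ρ₁ and F(t) = (α₁α₂/(ρ₁−ρ₂)) (e^{−ρ₂ t} − e^{−ρ₁ t}) 1_{t≥0} for almost every t ∈ ℝ, where F = Σ_{n≥1} (h⋆g)^{⋆n}. -/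

import Mathlib

/-!
With `k = h ⋆ g`, the claimed `F` solves the renewal equation `F = k + k ⋆ F`. Iterating it gives
`F = k + k^{⋆2} + ⋯ + k^{⋆n} + k^{⋆n} ⋆ F`, and the remainder is at most `‖k‖₁ⁿ ‖F‖∞ → 0`
because `‖k‖₁ ≤ ‖h‖₁ ‖g‖₁ < 1`.

The renewal equation is checked without computing `h ⋆ g` (whose shape changes when `β₁ = β₂`):
it follows by associativity from the coupled system `F = h ⋆ Ψ`, `Ψ = g + g ⋆ F`, where `F` and `Ψ`
are combinations of `e^{-ρ₁ t}` and `e^{-ρ₂ t}`. Since `ρ₁, ρ₂` are the roots of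
`(β₁ - ρ)(β₂ - ρ) = α₁ α₂`, they differ from `β₁, β₂`, and the system reduces to the elementary
convolution `e^{-a t} ⋆ e^{-b t} = (e^{-b t} - e^{-a t}) / (a - b)`.
-/

open MeasureTheory Set Filter Topology

noncomputable section

/-- Convolution of two functions on `ℝ` (w.r.t. Lebesgue measure). -/
def conv (f g : ℝ → ℝ) (t : ℝ) : ℝ := ∫ s, f (t - s) * g s

/-- `convPow f n = f^{⋆(n+1)}`, the `(n+1)`-fold convolution power of `f`. -/
def convPow (f : ℝ → ℝ) : ℕ → ℝ → ℝ
  | 0 => f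
  | n + 1 => conv f (convPow f n)

/-- `F = Σ_{n ≥ 1} (h⋆g)^{⋆n}`. -/
def Ffun (h g : ℝ → ℝ) (t : ℝ) : ℝ := ∑' n, convPow (conv h g) n t

section Convolution

variable {f g φ ψ : ℝ → ℝ} {M N : ℝ}

theorem conv_eq_convolution (f g : ℝ → ℝ) :
    conv f g = convolution f g (ContinuousLinearMap.mul ℝ ℝ) volume :=
  funext fun _ => convolution_mul_swap.symm

theorem integrable_conv_integrand (hf : Integrable f) (hφ : AEStronglyMeasurable φ)
    (hφM : ∀ s, |φ s| ≤ M) (t : ℝ) : Integrable fun s => f (t - s) * φ s :=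
  (hf.comp_sub_left t).mul_bdd hφ (ae_of_all _ hφM)

theorem abs_conv_le (hf : Integrable f) (hφM : ∀ s, |φ s| ≤ M) (t : ℝ) :
    |conv f φ t| ≤ (∫ s, |f s|) * M := by
  calc |conv f φ t| ≤ ∫ s, |f (t - s)| * M := by
        rw [← Real.norm_eq_abs]
        refine norm_integral_le_of_norm_le ((hf.comp_sub_left t).abs.mul_const M)
          (ae_of_all _ fun s => ?_)
        rw [Real.norm_eq_abs, abs_mul]
        exact mul_le_mul_of_nonneg_left (hφM s) (abs_nonneg _)
    _ = (∫ s, |f s|) * M := by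
        rw [integral_mul_const, integral_sub_left_eq_self (fun s => |f s|)]

theorem measurable_conv (hf : Measurable f) (hg : Measurable g) : Measurable (conv f g) :=
  (((hf.comp (measurable_fst.sub measurable_snd)).mul
    (hg.comp measurable_snd)).stronglyMeasurable.integral_prod_right').measurable

theorem conv_const_mul_left (c : ℝ) (f g : ℝ → ℝ) (t : ℝ) :
    conv (fun s => c * f s) g t = c * conv f g t := by
  simp only [conv, ← integral_const_mul, mul_assoc]

theorem conv_const_mul_right (c : ℝ) (f g : ℝ → ℝ) (t : ℝ) :
    conv f (fun s => c * g s) t = c * conv f g t := by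
  simp only [conv, ← integral_const_mul, mul_left_comm]

theorem conv_add_right (hf : Integrable f) (hφ : AEStronglyMeasurable φ)
    (hψ : AEStronglyMeasurable ψ) (hφM : ∀ s, |φ s| ≤ M) (hψN : ∀ s, |ψ s| ≤ N) (t : ℝ) :
    conv f (fun s => φ s + ψ s) t = conv f φ t + conv f ψ t := by
  simp only [conv, mul_add]
  exact integral_add (integrable_conv_integrand hf hφ hφM t)
    (integrable_conv_integrand hf hψ hψN t)

theorem conv_sub_right (hf : Integrable f) (hφ : AEStronglyMeasurable φ)
    (hψ : AEStronglyMeasurable ψ) (hφM : ∀ s, |φ s| ≤ M) (hψN : ∀ s, |ψ s| ≤ N) (t : ℝ) :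
    conv f (fun s => φ s - ψ s) t = conv f φ t - conv f ψ t := by
  simp only [conv, mul_sub]
  exact integral_sub (integrable_conv_integrand hf hφ hφM t)
    (integrable_conv_integrand hf hψ hψN t)

theorem conv_eq_zero_of_neg (hf : ∀ u < 0, f u = 0) (hg : ∀ u < 0, g u = 0) {t : ℝ}
    (ht : t < 0) : conv f g t = 0 := by
  refine integral_eq_zero_of_ae (ae_of_all _ fun s => ?_)
  rcases lt_or_ge s 0 with hs | hs
  · simp [hg s hs]
  · simp [hf (t - s) (by linarith)]

theorem conv_eq_intervalIntegral (hf : ∀ u < 0, f u = 0) (hg : ∀ u < 0, g u = 0) {t : ℝ}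
    (ht : 0 ≤ t) : conv f g t = ∫ s in 0..t, f (t - s) * g s := by
  rw [conv, intervalIntegral.integral_of_le ht, ← integral_Icc_eq_integral_Ioc,
    setIntegral_eq_integral_of_forall_compl_eq_zero fun s hs => ?_]
  rcases not_and_or.1 hs with hs | hs
  · simp [hg s (not_le.1 hs)]
  · simp [hf (t - s) (by linarith [not_le.1 hs])]

theorem integrable_conv (hf : Integrable f) (hg : Integrable g) : Integrable (conv f g) := by
  rw [conv_eq_convolution]
  exact hf.integrable_convolution _ hg

theorem integral_abs_conv_le (hf : Integrable f) (hg : Integrable g) :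
    ∫ t, |conv f g t| ≤ (∫ t, |f t|) * ∫ t, |g t| := by
  have habs : conv (fun s => |f s|) (fun s => |g s|) = fun t => ∫ s, |f (t - s) * g s| := by
    ext t
    simp only [conv, abs_mul]
  calc ∫ t, |conv f g t| ≤ ∫ t, conv (fun s => |f s|) (fun s => |g s|) t := by
        refine integral_mono ?_ ?_ fun t => ?_
        · exact (integrable_conv hf hg).abs
        · exact integrable_conv hf.abs hg.abs
        · rw [habs]
          exact abs_integral_le_integral_abs
    _ = (∫ t, |f t|) * ∫ t, |g t| := by
        rw [conv_eq_convolution, integral_convolution _ hf.abs hg.abs]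
        rfl

theorem conv_assoc (hf : Integrable f) (hg : Integrable g) (hgm : Measurable g)
    (hφ : Measurable φ) (hφM : ∀ s, |φ s| ≤ M) (t : ℝ) :
    conv (conv f g) φ t = conv f (conv g φ) t := by
  have hexists : ∀ {u v : ℝ → ℝ} {K : ℝ}, Integrable u → AEStronglyMeasurable v →
      (∀ s, |v s| ≤ K) → ∀ x, ConvolutionExistsAt u v x (ContinuousLinearMap.mul ℝ ℝ) volume :=
    fun hu hv hvK x => convolutionExistsAt_iff_integrable_swap.2
      (integrable_conv_integrand hu hv hvK x)
  have hnorm : convolution (fun x => ‖g x‖) (fun x => ‖φ x‖) (ContinuousLinearMap.mul ℝ ℝ) volume =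
      conv (fun s => |g s|) (fun s => |φ s|) := (conv_eq_convolution _ _).symm
  have hbound : ∀ s, |conv (fun s => |g s|) (fun s => |φ s|) s| ≤ (∫ s, |g s|) * M := by
    intro s
    simpa only [abs_abs] using abs_conv_le hg.abs (φ := fun s => |φ s|) (by simpa using hφM) s
  simp only [conv_eq_convolution]
  refine convolution_assoc _ _ _ _ (fun x y z => mul_assoc x y z) hf.aestronglyMeasurable
    hg.aestronglyMeasurable hφ.aestronglyMeasurable (hf.ae_convolution_exists _ hg)
    (ae_of_all _ (hexists hg.norm hφ.norm.aestronglyMeasurable (by simpa using hφM)))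
    (hexists hf.norm ?_ (K := (∫ s, |g s|) * M) ?_ t)
  · rw [hnorm]
    exact (measurable_conv hgm.abs hφ.abs).aestronglyMeasurable
  · simpa only [hnorm] using hbound

end Convolution

theorem hasSum_convPow_of_eq_add_conv {k F : ℝ → ℝ} {M : ℝ} (hk : Measurable k)
    (hk_int : Integrable k) (hk_lt : ∫ t, |k t| < 1) (hF : Measurable F)
    (hFM : ∀ t, |F t| ≤ M) (hF_eq : ∀ t, F t = k t + conv k F t) (t : ℝ) :
    HasSum (fun n => convPow k n t) (F t) := by
  set r := ∫ t, |k t|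
  have hr : 0 ≤ r := integral_nonneg fun _ => abs_nonneg _
  -- `T n = k^{⋆n} ⋆ F` is the remainder of the Neumann series after `n` terms.
  set T : ℕ → ℝ → ℝ := fun n => (conv k)^[n] F with hT
  have hT_succ : ∀ n, T (n + 1) = conv k (T n) := fun n => Function.iterate_succ_apply' _ _ _
  have hT_meas : ∀ n, Measurable (T n) := by
    intro n
    induction n with
    | zero => exact hF
    | succ n ih => rw [hT_succ]; exact measurable_conv hk ih
  have hT_bound : ∀ n s, |T n s| ≤ r ^ n * M := by
    intro n
    induction n with
    | zero => simpa [hT] using hFM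
    | succ n ih => intro s; rw [hT_succ, pow_succ', mul_assoc]; exact abs_conv_le hk_int ih s
  have hconvPow : ∀ n, convPow k n = fun s => T n s - T (n + 1) s := by
    intro n
    induction n with
    | zero => funext s; simp [hT, convPow, hF_eq s]
    | succ n ih =>
      funext s
      rw [convPow, ih, conv_sub_right hk_int (hT_meas n).aestronglyMeasurable
        (hT_meas (n + 1)).aestronglyMeasurable (hT_bound n) (hT_bound (n + 1)),
        hT_succ (n + 1), hT_succ n]
  have hT_tendsto : Tendsto (fun n => T n t) atTop (𝓝 0) :=
    squeeze_zero_norm (fun n => hT_bound n t)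
      (by simpa using (tendsto_pow_atTop_nhds_zero_of_lt_one hr hk_lt).mul_const M)
  have hsummable : Summable fun n => convPow k n t := by
    refine .of_norm_bounded ((summable_geometric_of_lt_one hr hk_lt).mul_left (2 * M))
      fun n => ?_
    rw [hconvPow, Real.norm_eq_abs]
    have hM : 0 ≤ M := (abs_nonneg _).trans (hFM 0)
    have hr_pow : r ^ (n + 1) * M ≤ r ^ n * M :=
      mul_le_mul_of_nonneg_right (pow_le_pow_of_le_one hr hk_lt.le n.le_succ) hM
    calc |T n t - T (n + 1) t| ≤ |T n t| + |T (n + 1) t| := abs_sub _ _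
      _ ≤ 2 * M * r ^ n := by linarith [hT_bound n t, hT_bound (n + 1) t]
  refine hsummable.hasSum_iff_tendsto_nat.2 ?_
  simp only [hconvPow, Finset.sum_range_sub']
  simpa [hT] using tendsto_const_nhds.sub hT_tendsto

theorem eq_conv_add_conv_conv_of_coupled {h g F Ψ : ℝ → ℝ} {Mg M : ℝ} (hh : Integrable h)
    (hg : Integrable g) (hgm : Measurable g) (hgM : ∀ t, |g t| ≤ Mg) (hFm : Measurable F)
    (hFM : ∀ t, |F t| ≤ M) (hFΨ : ∀ t, F t = conv h Ψ t) (hΨ : ∀ t, Ψ t = g t + conv g F t)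
    (t : ℝ) : F t = conv h g t + conv (conv h g) F t := by
  rw [hFΨ, show Ψ = fun s => g s + conv g F s from funext hΨ,
    conv_add_right hh hgm.aestronglyMeasurable (measurable_conv hgm hFm).aestronglyMeasurable
      hgM (abs_conv_le hg hFM), conv_assoc hh hg hgm hFm hFM]

def truncExp (a t : ℝ) : ℝ := if 0 ≤ t then Real.exp (-(a * t)) else 0

section TruncExp

variable {a b t : ℝ}

theorem truncExp_of_nonneg (ht : 0 ≤ t) : truncExp a t = Real.exp (-(a * t)) := if_pos ht

theorem truncExp_of_neg (ht : t < 0) : truncExp a t = 0 := if_neg ht.not_ge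

theorem truncExp_eq_indicator (a : ℝ) :
    truncExp a = (Ici 0).indicator fun t => Real.exp (-(a * t)) := by
  ext t
  simp [truncExp, indicator_apply]

theorem truncExp_nonneg (a t : ℝ) : 0 ≤ truncExp a t := by
  rw [truncExp_eq_indicator]
  exact indicator_nonneg (fun _ _ => (Real.exp_pos _).le) t

theorem abs_truncExp_le_one (ha : 0 ≤ a) (t : ℝ) : |truncExp a t| ≤ 1 := by
  rw [abs_of_nonneg (truncExp_nonneg a t), truncExp]
  split_ifs with ht
  · exact Real.exp_le_one_iff.2 (neg_nonpos.2 (mul_nonneg ha ht))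
  · exact zero_le_one

theorem abs_const_mul_truncExp_le (c : ℝ) (ha : 0 ≤ a) (t : ℝ) : |c * truncExp a t| ≤ |c| := by
  rw [abs_mul]
  exact mul_le_of_le_one_right (abs_nonneg c) (abs_truncExp_le_one ha t)

theorem abs_const_mul_truncExp_add_le {b : ℝ} (c₁ c₂ : ℝ) (ha : 0 ≤ a) (hb : 0 ≤ b) (t : ℝ) :
    |c₁ * truncExp a t + c₂ * truncExp b t| ≤ |c₁| + |c₂| :=
  (abs_add_le _ _).trans (add_le_add (abs_const_mul_truncExp_le c₁ ha t)
    (abs_const_mul_truncExp_le c₂ hb t))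

theorem measurable_truncExp (a : ℝ) : Measurable (truncExp a) := by
  rw [truncExp_eq_indicator]
  exact (by fun_prop : Measurable fun t => Real.exp (-(a * t))).indicator measurableSet_Ici

theorem integrable_truncExp (ha : 0 < a) : Integrable (truncExp a) := by
  rw [truncExp_eq_indicator, integrable_indicator_iff measurableSet_Ici,
    integrableOn_Ici_iff_integrableOn_Ioi]
  simpa only [neg_mul] using integrableOn_exp_mul_Ioi (neg_neg_of_pos ha) 0

theorem integral_truncExp (ha : 0 < a) : ∫ t, truncExp a t = a⁻¹ := by
  rw [truncExp_eq_indicator, integral_indicator measurableSet_Ici, integral_Ici_eq_integral_Ioi]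
  simp only [← neg_mul]
  rw [integral_exp_mul_Ioi (neg_neg_of_pos ha)]
  simp

theorem integral_abs_const_mul_truncExp (c : ℝ) (ha : 0 < a) :
    ∫ t, |c * truncExp a t| = |c| / a := by
  simp_rw [abs_mul, abs_of_nonneg (truncExp_nonneg _ _)]
  rw [integral_const_mul, integral_truncExp ha, div_eq_mul_inv]

theorem conv_truncExp (hab : a ≠ b) (t : ℝ) :
    conv (truncExp a) (truncExp b) t = (truncExp b t - truncExp a t) / (a - b) := by
  rcases lt_or_ge t 0 with ht | ht
  · rw [conv_eq_zero_of_neg (fun _ => truncExp_of_neg) (fun _ => truncExp_of_neg) ht,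
      truncExp_of_neg ht, truncExp_of_neg ht, sub_self, zero_div]
  have hab' : a - b ≠ 0 := sub_ne_zero.2 hab
  have hintegrand : EqOn (fun s => truncExp a (t - s) * truncExp b s)
      (fun s => Real.exp (-(a * t)) * Real.exp ((a - b) * s)) (uIcc 0 t) := by
    intro s hs
    rw [uIcc_of_le ht] at hs
    simp only
    rw [truncExp_of_nonneg (sub_nonneg.2 hs.2), truncExp_of_nonneg hs.1, ← Real.exp_add,
      ← Real.exp_add]
    ring_nf
  rw [conv_eq_intervalIntegral (fun _ => truncExp_of_neg) (fun _ => truncExp_of_neg) ht,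
    intervalIntegral.integral_congr hintegrand, intervalIntegral.integral_const_mul,
    intervalIntegral.integral_comp_mul_left (fun s => Real.exp s) hab', integral_exp,
    truncExp_of_nonneg ht, truncExp_of_nonneg ht, mul_zero, Real.exp_zero, smul_eq_mul,
    mul_comm (a - b) t]
  field_simp
  rw [mul_sub, ← Real.exp_add]
  ring_nf

theorem conv_const_mul_truncExp_add {b₁ b₂ : ℝ} (ha : 0 < a) (hb₁ : 0 ≤ b₁) (hb₂ : 0 ≤ b₂)
    (h₁ : a ≠ b₁) (h₂ : a ≠ b₂) (c c₁ c₂ t : ℝ) :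
    conv (fun s => c * truncExp a s) (fun s => c₁ * truncExp b₁ s + c₂ * truncExp b₂ s) t =
      c * (c₁ * ((truncExp b₁ t - truncExp a t) / (a - b₁)) +
        c₂ * ((truncExp b₂ t - truncExp a t) / (a - b₂))) := by
  rw [conv_const_mul_left, conv_add_right (integrable_truncExp ha)
    ((measurable_truncExp b₁).const_mul c₁).aestronglyMeasurable
    ((measurable_truncExp b₂).const_mul c₂).aestronglyMeasurable
    (abs_const_mul_truncExp_le c₁ hb₁) (abs_const_mul_truncExp_le c₂ hb₂),
    conv_const_mul_right, conv_const_mul_right, conv_truncExp h₁, conv_truncExp h₂]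

end TruncExp

theorem sub_mul_sub_eq_of_sq_eq {β₁ β₂ a s ρ : ℝ} (hs : s ^ 2 = (β₁ - β₂) ^ 2 + 4 * a)
    (hρ : ρ = (β₁ + β₂ + s) / 2) : (β₁ - ρ) * (β₂ - ρ) = a := by
  subst hρ
  linear_combination hs / 4

theorem exponential_renewal_equation {α₁ α₂ β₁ β₂ ρ₁ ρ₂ : ℝ} (hα : α₁ * α₂ ≠ 0) (hβ₁ : 0 < β₁)
    (hβ₂ : 0 < β₂) (hρ₁ : 0 ≤ ρ₁) (hρ₂ : 0 ≤ ρ₂) (hρ : ρ₁ ≠ ρ₂)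
    (hchar₁ : (β₁ - ρ₁) * (β₂ - ρ₁) = α₁ * α₂) (hchar₂ : (β₁ - ρ₂) * (β₂ - ρ₂) = α₁ * α₂)
    (t : ℝ) :
    let h := fun s => α₁ * truncExp β₁ s
    let g := fun s => α₂ * truncExp β₂ s
    let C := α₁ * α₂ / (ρ₁ - ρ₂)
    let F := fun s => C * truncExp ρ₂ s + -C * truncExp ρ₁ s
    F t = conv h g t + conv (conv h g) F t := by
  intro h g C F
  have hne : ∀ {β ρ β' : ℝ}, (β - ρ) * (β' - ρ) = α₁ * α₂ → β ≠ ρ ∧ β' ≠ ρ := fun hc =>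
    ⟨sub_ne_zero.1 (left_ne_zero_of_mul (hc ▸ hα)), sub_ne_zero.1 (right_ne_zero_of_mul (hc ▸ hα))⟩
  obtain ⟨hβ₁ρ₁, hβ₂ρ₁⟩ := hne hchar₁
  obtain ⟨hβ₁ρ₂, hβ₂ρ₂⟩ := hne hchar₂
  have hsum : ρ₁ + ρ₂ = β₁ + β₂ := by
    have : (ρ₁ - ρ₂) * (ρ₁ + ρ₂ - β₁ - β₂) = 0 := by linear_combination hchar₁ - hchar₂
    linarith [(mul_eq_zero.1 this).resolve_left (sub_ne_zero.2 hρ)]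
  have hprod : (β₂ - ρ₁) * (β₂ - ρ₂) = -(α₁ * α₂) := by
    linear_combination -(β₂ - ρ₂) * hsum - hchar₂
  have hC : C * (ρ₁ - ρ₂) = α₁ * α₂ := div_mul_cancel₀ _ (sub_ne_zero.2 hρ)
  -- `Ψ = g + g ⋆ F`: its `e^{-β₂ t}` terms cancel because `(β₂ - ρ₁)(β₂ - ρ₂) = -α₁ α₂`.
  refine eq_conv_add_conv_conv_of_coupled (F := F)
    (Ψ := fun s => α₂ * C / (β₂ - ρ₂) * truncExp ρ₂ s + -(α₂ * C / (β₂ - ρ₁)) * truncExp ρ₁ s)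
    ((integrable_truncExp hβ₁).const_mul α₁) ((integrable_truncExp hβ₂).const_mul α₂)
    ((measurable_truncExp β₂).const_mul α₂) (abs_const_mul_truncExp_le α₂ hβ₂.le)
    (((measurable_truncExp ρ₂).const_mul C).add ((measurable_truncExp ρ₁).const_mul (-C)))
    (abs_const_mul_truncExp_add_le C (-C) hρ₂ hρ₁) (fun s => ?_) (fun s => ?_) t
  · rw [conv_const_mul_truncExp_add hβ₁ hρ₂ hρ₁ hβ₁ρ₂ hβ₁ρ₁]
    clear_value C
    simp only [F]
    field_simp
    linear_combination (C * (truncExp ρ₂ s - truncExp β₁ s) * (β₁ - ρ₁) * (β₂ - ρ₁)) * hchar₂ -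
      (C * (truncExp ρ₁ s - truncExp β₁ s) * (β₁ - ρ₂) * (β₂ - ρ₂)) * hchar₁
  · simp only [F]
    rw [conv_const_mul_truncExp_add hβ₂ hρ₂ hρ₁ hβ₂ρ₂ hβ₂ρ₁]
    clear_value C
    field_simp
    linear_combination (-(α₂ * truncExp β₂ s)) * (hprod + hC)

theorem hasSum_convPow_exponential {α₁ α₂ β₁ β₂ ρ₁ ρ₂ : ℝ} (hα : α₁ * α₂ ≠ 0) (hβ₁ : 0 < β₁)
    (hβ₂ : 0 < β₂) (hαβ : |α₁ * α₂| < β₁ * β₂) (hρ₁ : 0 ≤ ρ₁) (hρ₂ : 0 ≤ ρ₂) (hρ : ρ₁ ≠ ρ₂)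
    (hchar₁ : (β₁ - ρ₁) * (β₂ - ρ₁) = α₁ * α₂) (hchar₂ : (β₁ - ρ₂) * (β₂ - ρ₂) = α₁ * α₂)
    (t : ℝ) :
    HasSum (fun n => convPow (conv (fun s => α₁ * truncExp β₁ s) (fun s => α₂ * truncExp β₂ s)) n t)
      (α₁ * α₂ / (ρ₁ - ρ₂) * (truncExp ρ₂ t - truncExp ρ₁ t)) := by
  have hh := (integrable_truncExp hβ₁).const_mul α₁
  have hg := (integrable_truncExp hβ₂).const_mul α₂
  have hhm := (measurable_truncExp β₁).const_mul α₁
  have hgm := (measurable_truncExp β₂).const_mul α₂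
  have hk_lt : ∫ t, |conv (fun s => α₁ * truncExp β₁ s) (fun s => α₂ * truncExp β₂ s) t| < 1 := by
    refine (integral_abs_conv_le hh hg).trans_lt ?_
    rwa [integral_abs_const_mul_truncExp α₁ hβ₁, integral_abs_const_mul_truncExp α₂ hβ₂,
      div_mul_div_comm, ← abs_mul, div_lt_one (by positivity)]
  convert hasSum_convPow_of_eq_add_conv (measurable_conv hhm hgm) (integrable_conv hh hg) hk_lt
    (((measurable_truncExp ρ₂).const_mul _).add ((measurable_truncExp ρ₁).const_mul _))
    (abs_const_mul_truncExp_add_le _ _ hρ₂ hρ₁)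
    (exponential_renewal_equation hα hβ₁ hβ₂ hρ₁ hρ₂ hρ hchar₁ hchar₂) t using 1
  simp only [Pi.add_apply]
  ring

/-- Explicit form of `F = Σ_{n≥1} (h⋆g)^{⋆n}` for exponential kernels
`h(t) = α₁ e^{−β₁ t} 1_{t≥0}`, `g(t) = α₂ e^{−β₂ t} 1_{t≥0}` with `α₁α₂ < β₁β₂`
(so that `‖h‖₁‖g‖₁ = α₁α₂/(β₁β₂) < 1`). -/
theorem exponential_kernel_F (α₁ α₂ β₁ β₂ : ℝ)
    (hα₁ : 0 < α₁) (hα₂ : 0 < α₂) (hβ₁ : 0 < β₁) (hβ₂ : 0 < β₂)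
    (hαβ : α₁ * α₂ < β₁ * β₂)
    (h g : ℝ → ℝ)
    (hh : ∀ t, h t = if 0 ≤ t then α₁ * Real.exp (-(β₁ * t)) else 0)
    (hg : ∀ t, g t = if 0 ≤ t then α₂ * Real.exp (-(β₂ * t)) else 0)
    (ρ₁ ρ₂ : ℝ)
    (hρ₁ : ρ₁ = (β₁ + β₂ + Real.sqrt ((β₁ - β₂) ^ 2 + 4 * (α₁ * α₂))) / 2)
    (hρ₂ : ρ₂ = (β₁ + β₂ - Real.sqrt ((β₁ - β₂) ^ 2 + 4 * (α₁ * α₂))) / 2) :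
    (∫ t, h t) * (∫ t, g t) = α₁ * α₂ / (β₁ * β₂) ∧
    0 < ρ₂ ∧ ρ₂ < ρ₁ ∧
    ∀ᵐ t : ℝ, Ffun h g t =
      if 0 ≤ t then
        α₁ * α₂ / (ρ₁ - ρ₂) * (Real.exp (-(ρ₂ * t)) - Real.exp (-(ρ₁ * t)))
      else 0 := by
  have hα : 0 < α₁ * α₂ := mul_pos hα₁ hα₂
  have hD : 0 < (β₁ - β₂) ^ 2 + 4 * (α₁ * α₂) := by positivity
  have hchar₁ := sub_mul_sub_eq_of_sq_eq (Real.sq_sqrt hD.le) hρ₁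
  have hchar₂ := sub_mul_sub_eq_of_sq_eq (ρ := ρ₂) (s := -Real.sqrt ((β₁ - β₂) ^ 2 + 4 * (α₁ * α₂)))
    (by rw [neg_sq, Real.sq_sqrt hD.le]) (by rw [hρ₂]; ring)
  have hρ_lt : ρ₂ < ρ₁ := by rw [hρ₁, hρ₂]; linarith [Real.sqrt_pos.2 hD]
  have hρ₂_pos : 0 < ρ₂ := by
    rw [hρ₂, div_pos_iff_of_pos_right two_pos, sub_pos, Real.sqrt_lt' (by positivity)]
    nlinarith
  have hh' : h = fun t => α₁ * truncExp β₁ t := funext fun t => by simp [hh, truncExp]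
  have hg' : g = fun t => α₂ * truncExp β₂ t := funext fun t => by simp [hg, truncExp]
  refine ⟨?_, hρ₂_pos, hρ_lt, ae_of_all _ fun t => ?_⟩
  · rw [hh', hg', integral_const_mul, integral_const_mul, integral_truncExp hβ₁,
      integral_truncExp hβ₂]
    field_simp
  rw [Ffun, hh', hg', (hasSum_convPow_exponential hα.ne' hβ₁ hβ₂ (by rwa [abs_of_pos hα])
    (hρ₂_pos.trans hρ_lt).le hρ₂_pos.le hρ_lt.ne' hchar₁ hchar₂ t).tsum_eq]
  simp only [truncExp]
  split_ifs <;> ring
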